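/- For every t ∈ [0, 1+h) and every r ∈ (0, 1+h−t], the semigroup (time-homogeneous Markov) property holds: H_t(x) = ∫_ℝ H_{t+r}(z)·q^c(t, x; t+r, z) dz for all x ∈ ℝ. -/

import Mathlib

open MeasureTheory Filter Real Set

noncomputable section

namespace LAB

/-- The loss-averse utility index built from `σlo ≤ σhi`, reference point `c`
and a function `φ₁` on the gain domain (`θ = σlo/σhi`). -/
def lossUtility (σlo σhi c : ℝ) (φ₁ : ℝ → ℝ) : ℝ → ℝ := fun x =>
  if c ≤ x then φ₁ (x - c) else -(σhi / σlo) * φ₁ (-(σlo / σhi) * (x - c))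

/-- `φ₁` is bounded with bounded continuous derivatives up to order three on `[0,∞)`. -/
def Cb3 (φ₁ : ℝ → ℝ) : Prop :=
  ContDiffOn ℝ 3 φ₁ (Set.Ici 0) ∧
  ∀ k : ℕ, k ≤ 3 → ∃ C : ℝ, ∀ x ∈ Set.Ici (0 : ℝ),
    |iteratedDerivWithin k φ₁ (Set.Ici 0) x| ≤ C

/-- The density of the time-1 value of the oscillating Brownian motion with
parameters `σlo`, `σhi` and threshold `c`. -/
def oscDensity (σlo σhi c : ℝ) : ℝ → ℝ := fun y =>
  if 0 ≤ c then
    if c ≤ y then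
      (2 * σhi / ((σhi + σlo) * σlo * Real.sqrt (2 * Real.pi))) *
        Real.exp (-(c / σhi + (y - c) / σlo) ^ 2 / 2)
    else
      (1 / (σhi * Real.sqrt (2 * Real.pi))) *
        (Real.exp (-(y ^ 2) / (2 * σhi ^ 2)) -
          ((σhi - σlo) / (σhi + σlo)) * Real.exp (-((2 * c - y) ^ 2) / (2 * σhi ^ 2)))
  else
    if c ≤ y then
      (1 / (σlo * Real.sqrt (2 * Real.pi))) *
        (Real.exp (-(y ^ 2) / (2 * σlo ^ 2)) +
          ((σhi - σlo) / (σhi + σlo)) * Real.exp (-((y - 2 * c) ^ 2) / (2 * σlo ^ 2)))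
    else
      (1 / (σhi * Real.sqrt (2 * Real.pi))) *
        (Real.exp (-(y ^ 2) / (2 * σhi ^ 2)) -
          ((σhi - σlo) / (σhi + σlo)) * Real.exp (-((2 * c - y) ^ 2) / (2 * σhi ^ 2)))

/-- The two-valued diffusion coefficient: `σ̲` on `[c,∞)`, `σ̄` on `(−∞,c)`. -/
def sigmaStep (σlo σhi c : ℝ) : ℝ → ℝ := fun y => if c ≤ y then σlo else σhi

/-- The transition probability density `q^c(t,x;s,y)` of the oscillating
Brownian motion with diffusion coefficient `sigmaStep σlo σhi c`. -/
def transDensity (σlo σhi c t x s y : ℝ) : ℝ :=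
  (1 / (Real.sqrt (2 * Real.pi * (s - t)) * sigmaStep σlo σhi c y)) *
      Real.exp (-((x - c) / sigmaStep σlo σhi c x - (y - c) / sigmaStep σlo σhi c y) ^ 2 /
        (2 * (s - t)))
    + ((σhi - σlo) / (σhi + σlo)) *
      (Real.sign (y - c) / (Real.sqrt (2 * Real.pi * (s - t)) * sigmaStep σlo σhi c y)) *
      Real.exp (-(|(x - c) / sigmaStep σlo σhi c x| + |(y - c) / sigmaStep σlo σhi c y|) ^ 2 /
        (2 * (s - t)))

/-- The function `H_t(x) = E[φ(Y_{1+h}^{t,x,c})]`, expressed through the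
transition density of the oscillating Brownian motion; `H_{1+h} = φ`. -/
def Hfun (σlo σhi c : ℝ) (φ₁ : ℝ → ℝ) (h t : ℝ) : ℝ → ℝ := fun x =>
  if t < 1 + h then
    ∫ y, lossUtility σlo σhi c φ₁ y * transDensity σlo σhi c t x (1 + h) y
  else lossUtility σlo σhi c φ₁ x

/-!
In the coordinate `X = (x - c) / σ(x)` the density `q^c(t, x; s, y)` becomes, up to the
Jacobian `1 / σ(y)`, the skew Brownian motion density
`p(τ, X, Y) = g_τ(X - Y) + β sgn(Y) g_τ(|X| + |Y|)` with `β = (σ̄ - σ̲) / (σ̄ + σ̲)` and `g_τ` the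
heat kernel. Chapman–Kolmogorov for `p` reduces to that of `g_τ`: after symmetrising in the
middle variable `Z` the `β²` terms cancel, and `p(τ₁, X, Z) p(τ₂, Z, Y)` has the same even part
as `g_{τ₁}(X - Z) (g_{τ₂}(Z - Y) + β sgn(Y) g_{τ₂}(Z - v))`, where `v = ∓|Y|` is chosen so that
`g(X - v) = g(|X| + |Y|)`. Changing variables gives Chapman–Kolmogorov for `q^c`, and the
semigroup property of `H` follows by Fubini since `φ` is bounded.
-/

def heatKernel (τ u : ℝ) : ℝ := Real.exp (-u ^ 2 / (2 * τ)) / Real.sqrt (2 * Real.pi * τ)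

section HeatKernel
variable {τ : ℝ}

@[simp]
lemma heatKernel_neg (τ u : ℝ) : heatKernel τ (-u) = heatKernel τ u := by
  simp [heatKernel]

lemma heatKernel_nonneg (τ u : ℝ) : 0 ≤ heatKernel τ u := by
  unfold heatKernel; positivity

lemma continuous_heatKernel (τ : ℝ) : Continuous (heatKernel τ) := by
  unfold heatKernel; fun_prop

lemma heatKernel_le_of_abs_le (hτ : 0 < τ) {u v : ℝ} (h : |u| ≤ |v|) :
    heatKernel τ v ≤ heatKernel τ u := by
  have hsq : u ^ 2 ≤ v ^ 2 := sq_le_sq.2 h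
  unfold heatKernel
  gcongr

lemma heatKernel_eq_gaussian :
    heatKernel τ = fun u => Real.exp (-(2 * τ)⁻¹ * u ^ 2) / Real.sqrt (2 * Real.pi * τ) := by
  ext u
  unfold heatKernel
  ring_nf

lemma integrable_heatKernel (hτ : 0 < τ) : Integrable (heatKernel τ) := by
  rw [heatKernel_eq_gaussian]
  exact (integrable_exp_neg_mul_sq (by positivity)).div_const _

lemma integral_heatKernel (hτ : 0 < τ) : ∫ u, heatKernel τ u = 1 := by
  rw [heatKernel_eq_gaussian, integral_div, integral_gaussian,
    show Real.pi / (2 * τ)⁻¹ = 2 * Real.pi * τ by field_simp]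
  exact div_self (by positivity)

lemma heatKernel_mul_heatKernel {t₁ t₂ : ℝ} (h₁ : 0 < t₁) (h₂ : 0 < t₂) (x y z : ℝ) :
    heatKernel t₁ (x - z) * heatKernel t₂ (z - y) =
      heatKernel (t₁ + t₂) (x - y) *
        heatKernel (t₁ * t₂ / (t₁ + t₂)) (z - (t₂ * x + t₁ * y) / (t₁ + t₂)) := by
  unfold heatKernel
  rw [div_mul_div_comm, div_mul_div_comm, ← Real.exp_add, ← Real.exp_add,
    ← Real.sqrt_mul (by positivity), ← Real.sqrt_mul (by positivity)]
  congr 2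
  · field_simp
    ring
  · field_simp

lemma integrable_heatKernel_mul_heatKernel {t₁ t₂ : ℝ} (h₁ : 0 < t₁) (h₂ : 0 < t₂) (x y : ℝ) :
    Integrable fun z => heatKernel t₁ (x - z) * heatKernel t₂ (z - y) := by
  simp_rw [heatKernel_mul_heatKernel h₁ h₂ x y]
  exact ((integrable_heatKernel (by positivity)).comp_sub_right _).const_mul _

lemma integral_heatKernel_mul_heatKernel {t₁ t₂ : ℝ} (h₁ : 0 < t₁) (h₂ : 0 < t₂) (x y : ℝ) :
    ∫ z, heatKernel t₁ (x - z) * heatKernel t₂ (z - y) = heatKernel (t₁ + t₂) (x - y) := by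
  simp_rw [heatKernel_mul_heatKernel h₁ h₂ x y]
  rw [integral_const_mul, integral_sub_right_eq_self (heatKernel _),
    integral_heatKernel (by positivity), mul_one]

end HeatKernel

lemma integral_eq_of_add_comp_neg_eq {E : Type*} [NormedAddCommGroup E] [NormedSpace ℝ E]
    {f g : ℝ → E} (hf : Integrable f) (hg : Integrable g)
    (hfg : ∀ z, 0 < z → f z + f (-z) = g z + g (-z)) :
    ∫ z, f z = ∫ z, g z := by
  have hfg' : ∀ᵐ z, f z + f (-z) = g z + g (-z) := by
    filter_upwards [Measure.ae_ne volume 0] with z hz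
    rcases hz.lt_or_gt with hz | hz
    · simpa [add_comm] using hfg (-z) (neg_pos.2 hz)
    · exact hfg z hz
  have htwice : (2 : ℝ) • ∫ z, f z = (2 : ℝ) • ∫ z, g z := calc
    (2 : ℝ) • ∫ z, f z = ∫ z, f z + f (-z) := by
      rw [integral_add hf hf.comp_neg, integral_neg_eq_self f, two_smul]
    _ = ∫ z, g z + g (-z) := integral_congr_ae hfg'
    _ = (2 : ℝ) • ∫ z, g z := by
      rw [integral_add hg hg.comp_neg, integral_neg_eq_self g, two_smul]
  exact smul_right_injective E two_ne_zero htwice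

lemma integral_integral_mul_swap {α β : Type*} [MeasurableSpace α] [MeasurableSpace β]
    {μ : Measure α} {ν : Measure β} [SFinite μ] [SFinite ν]
    {k : α → β → ℝ} (hk : AEStronglyMeasurable (Function.uncurry k) (μ.prod ν))
    (hk_int : ∀ z, Integrable (k z) ν) {C : ℝ} (hkC : ∀ z, ∫ y, |k z y| ∂ν ≤ C)
    {w : α → ℝ} (hw : Integrable w μ)
    {φ : β → ℝ} (hφ : AEStronglyMeasurable φ ν) {M : ℝ} (hφM : ∀ y, |φ y| ≤ M) :
    ∫ z, (∫ y, φ y * k z y ∂ν) * w z ∂μ = ∫ y, φ y * ∫ z, w z * k z y ∂μ ∂ν := by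
  set F : α × β → ℝ := fun p => φ p.2 * k p.1 p.2 * w p.1
  have hF : AEStronglyMeasurable F (μ.prod ν) :=
    (hφ.comp_snd.mul hk).mul hw.aestronglyMeasurable.comp_fst
  have hslice : ∀ z, Integrable (fun y => φ y * k z y) ν := fun z =>
    (hk_int z).bdd_mul hφ (Eventually.of_forall fun y => hφM y)
  have hbound : ∀ z, ∫ y, ‖F (z, y)‖ ∂ν ≤ |M| * C * ‖w z‖ := fun z => calc
    ∫ y, ‖F (z, y)‖ ∂ν = (∫ y, |φ y| * |k z y| ∂ν) * ‖w z‖ := by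
      simp only [F, norm_mul, Real.norm_eq_abs, integral_mul_const]
    _ ≤ (|M| * ∫ y, |k z y| ∂ν) * ‖w z‖ := by
      rw [← integral_const_mul]
      refine mul_le_mul_of_nonneg_right (integral_mono
        (by simpa [abs_mul] using (hslice z).abs) ((hk_int z).abs.const_mul |M|) fun y => ?_)
        (norm_nonneg _)
      exact mul_le_mul_of_nonneg_right ((hφM y).trans (le_abs_self M)) (abs_nonneg _)
    _ ≤ |M| * C * ‖w z‖ := by
      gcongr
      exact hkC z
  have hFint : Integrable F (μ.prod ν) := by
    rw [integrable_prod_iff hF]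
    refine ⟨Eventually.of_forall fun z => (hslice z).mul_const (w z), ?_⟩
    refine (hw.norm.const_mul (|M| * C)).mono' hF.norm.integral_prod_right' ?_
    exact Eventually.of_forall fun z => by
      rw [Real.norm_of_nonneg (integral_nonneg fun y => norm_nonneg _)]
      exact hbound z
  calc ∫ z, (∫ y, φ y * k z y ∂ν) * w z ∂μ = ∫ z, ∫ y, F (z, y) ∂ν ∂μ := by
        simp only [F, integral_mul_const]
    _ = ∫ y, ∫ z, F (z, y) ∂μ ∂ν := integral_integral_swap hFint
    _ = ∫ y, φ y * ∫ z, w z * k z y ∂μ ∂ν := by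
        congr 1; ext y
        rw [← integral_const_mul]
        congr 1; ext z
        simp only [F]; ring

lemma measurable_sign : Measurable Real.sign :=
  Measurable.ite measurableSet_Iio measurable_const
    (Measurable.ite measurableSet_Ioi measurable_const measurable_const)

lemma sign_div_of_pos {a b : ℝ} (hb : 0 < b) : Real.sign (a / b) = Real.sign a := by
  rcases lt_trichotomy a 0 with ha | rfl | ha
  · rw [Real.sign_of_neg ha, Real.sign_of_neg (div_neg_of_neg_of_pos ha hb)]
  · simp
  · rw [Real.sign_of_pos ha, Real.sign_of_pos (div_pos ha hb)]

def skewKernel (β τ x y : ℝ) : ℝ :=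
  heatKernel τ (x - y) + β * Real.sign y * heatKernel τ (|x| + |y|)

lemma measurable_skewKernel (β τ : ℝ) : Measurable (Function.uncurry (skewKernel β τ)) := by
  have hg := (continuous_heatKernel τ).measurable
  unfold Function.uncurry skewKernel
  exact (hg.comp (by fun_prop)).add
    (((measurable_sign.comp measurable_snd).const_mul β).mul (hg.comp (by fun_prop)))

section SkewKernel
variable {β τ : ℝ}

lemma abs_skewKernel_le (hτ : 0 < τ) (x y : ℝ) :
    |skewKernel β τ x y| ≤ (1 + |β|) * heatKernel τ (x - y) := by
  have hsign : |Real.sign y| ≤ 1 := by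
    rcases Real.sign_apply_eq y with h | h | h <;> simp [h]
  have hreflect : heatKernel τ (|x| + |y|) ≤ heatKernel τ (x - y) :=
    heatKernel_le_of_abs_le hτ ((abs_sub x y).trans (le_abs_self _))
  calc |skewKernel β τ x y|
      ≤ heatKernel τ (x - y) + |β| * |Real.sign y| * heatKernel τ (|x| + |y|) := by
        unfold skewKernel
        refine (abs_add_le _ _).trans ?_
        simp only [abs_mul, abs_of_nonneg (heatKernel_nonneg _ _), le_refl]
    _ ≤ heatKernel τ (x - y) + |β| * 1 * heatKernel τ (x - y) := by
        gcongr
        exact heatKernel_nonneg _ _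
    _ = (1 + |β|) * heatKernel τ (x - y) := by ring

lemma integrable_skewKernel (hτ : 0 < τ) (x : ℝ) : Integrable (skewKernel β τ x) := by
  refine Integrable.mono' (((integrable_heatKernel hτ).comp_sub_left x).const_mul (1 + |β|))
    ((measurable_skewKernel β τ).comp measurable_prodMk_left).aestronglyMeasurable
    (Eventually.of_forall fun y => abs_skewKernel_le hτ x y)

lemma integral_abs_skewKernel_le (hτ : 0 < τ) (x : ℝ) :
    ∫ y, |skewKernel β τ x y| ≤ 1 + |β| := calc
  ∫ y, |skewKernel β τ x y| ≤ ∫ y, (1 + |β|) * heatKernel τ (x - y) :=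
    integral_mono (integrable_skewKernel hτ x).abs
      (((integrable_heatKernel hτ).comp_sub_left x).const_mul _) (abs_skewKernel_le hτ x)
  _ = 1 + |β| := by
    rw [integral_const_mul, integral_sub_left_eq_self (heatKernel τ), integral_heatKernel hτ,
      mul_one]

end SkewKernel

section ChapmanKolmogorov
variable {β t₁ t₂ : ℝ}

lemma integrable_skewKernel_mul_skewKernel (h₁ : 0 < t₁) (h₂ : 0 < t₂) (x y : ℝ) :
    Integrable fun z => skewKernel β t₁ x z * skewKernel β t₂ z y := by
  refine ((integrable_heatKernel_mul_heatKernel h₁ h₂ x y).const_mul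
    ((1 + |β|) * (1 + |β|))).mono'
    (((measurable_skewKernel β t₁).comp measurable_prodMk_left).mul
      ((measurable_skewKernel β t₂).comp measurable_prodMk_right)).aestronglyMeasurable
    (Eventually.of_forall fun z => ?_)
  rw [Real.norm_eq_abs, abs_mul, mul_mul_mul_comm]
  exact mul_le_mul (abs_skewKernel_le h₁ x z) (abs_skewKernel_le h₂ z y) (abs_nonneg _)
    (by positivity [heatKernel_nonneg t₁ (x - z)])

lemma skewKernel_mul_skewKernel_add_neg (x y : ℝ) {z : ℝ} (hz : 0 < z) :
    let v := if 0 ≤ x then -|y| else |y|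
    let G := fun z => heatKernel t₁ (x - z) * heatKernel t₂ (z - y) +
      β * Real.sign y * (heatKernel t₁ (x - z) * heatKernel t₂ (z - v))
    skewKernel β t₁ x z * skewKernel β t₂ z y + skewKernel β t₁ x (-z) * skewKernel β t₂ (-z) y =
      G z + G (-z) := by
  intro v G
  rcases le_or_gt 0 x with hx | hx <;> rcases lt_trichotomy y 0 with hy | hy | hy <;>
    simp only [v, G, skewKernel, heatKernel, hx, hy, hz, hz.le, if_true, if_false, not_le.2,
      abs_of_nonneg, abs_of_neg, abs_of_pos, abs_neg, abs_zero, Real.sign_of_pos,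
      Real.sign_of_neg, Real.sign_neg, Real.sign_zero] <;>
    ring_nf

lemma integral_skewKernel_mul_skewKernel (h₁ : 0 < t₁) (h₂ : 0 < t₂) (x y : ℝ) :
    ∫ z, skewKernel β t₁ x z * skewKernel β t₂ z y = skewKernel β (t₁ + t₂) x y := by
  set v := if 0 ≤ x then -|y| else |y|
  have hv : heatKernel (t₁ + t₂) (x - v) = heatKernel (t₁ + t₂) (|x| + |y|) := by
    rcases le_or_gt 0 x with hx | hx
    · simp [v, hx, abs_of_nonneg hx]
    · rw [← heatKernel_neg]
      simp [v, hx.not_ge, abs_of_neg hx, add_comm, sub_eq_add_neg]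
  have hGy := integrable_heatKernel_mul_heatKernel h₁ h₂ x y
  have hGv := (integrable_heatKernel_mul_heatKernel h₁ h₂ x v).const_mul (β * Real.sign y)
  rw [integral_eq_of_add_comp_neg_eq (integrable_skewKernel_mul_skewKernel h₁ h₂ x y)
    (hGy.add hGv) fun z hz => skewKernel_mul_skewKernel_add_neg x y hz,
    integral_add' hGy hGv, integral_const_mul,
    integral_heatKernel_mul_heatKernel h₁ h₂, integral_heatKernel_mul_heatKernel h₁ h₂, hv]
  rfl

end ChapmanKolmogorov

def oscCoord (σlo σhi c z : ℝ) : ℝ := (z - c) / sigmaStep σlo σhi c z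

section ChangeOfVariables
variable {σlo σhi c : ℝ}

lemma measurable_sigmaStep : Measurable (sigmaStep σlo σhi c) :=
  Measurable.ite measurableSet_Ici measurable_const measurable_const

lemma measurable_oscCoord : Measurable (oscCoord σlo σhi c) :=
  (measurable_id.sub_const c).div measurable_sigmaStep

lemma sigmaStep_pos (hlo : 0 < σlo) (hhi : 0 < σhi) (z : ℝ) : 0 < sigmaStep σlo σhi c z := by
  unfold sigmaStep; split_ifs <;> assumption

lemma comp_oscCoord_div_sigmaStep (hlo : 0 < σlo) (hhi : 0 < σhi) (f : ℝ → ℝ) (z : ℝ) :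
    f (oscCoord σlo σhi c z) / sigmaStep σlo σhi c z =
      (Ici 0).indicator f ((z - c) / σlo) / σlo + (Iio 0).indicator f ((z - c) / σhi) / σhi := by
  unfold oscCoord sigmaStep
  by_cases hz : c ≤ z
  · have : ¬ (z - c) / σhi < 0 := not_lt.2 (div_nonneg (sub_nonneg.2 hz) hhi.le)
    simp [hz, div_nonneg (sub_nonneg.2 hz) hlo.le, this]
  · have hz' : z - c < 0 := by linarith
    have : ¬ 0 ≤ (z - c) / σlo := not_le.2 (div_neg_of_neg_of_pos hz' hlo)
    simp [hz, div_neg_of_neg_of_pos hz' hhi, this]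

lemma integral_comp_sub_div_div {σ : ℝ} (hσ : 0 < σ) (g : ℝ → ℝ) :
    ∫ z, g ((z - c) / σ) / σ = ∫ u, g u := by
  rw [integral_div, integral_sub_right_eq_self (fun z => g (z / σ)) c, Measure.integral_comp_div,
    abs_of_pos hσ, smul_eq_mul, mul_div_cancel_left₀ _ hσ.ne']

lemma integrable_comp_sub_div_div {σ : ℝ} (hσ : 0 < σ) {g : ℝ → ℝ} (hg : Integrable g) :
    Integrable fun z => g ((z - c) / σ) / σ :=
  ((hg.comp_div hσ.ne').comp_sub_right c).div_const σ

lemma integrable_comp_oscCoord_div (hlo : 0 < σlo) (hhi : 0 < σhi) {f : ℝ → ℝ}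
    (hf : Integrable f) :
    Integrable fun z => f (oscCoord σlo σhi c z) / sigmaStep σlo σhi c z := by
  simp_rw [comp_oscCoord_div_sigmaStep hlo hhi]
  exact (integrable_comp_sub_div_div hlo (hf.indicator measurableSet_Ici)).add
    (integrable_comp_sub_div_div hhi (hf.indicator measurableSet_Iio))

lemma integral_comp_oscCoord_div (hlo : 0 < σlo) (hhi : 0 < σhi) {f : ℝ → ℝ}
    (hf : Integrable f) :
    ∫ z, f (oscCoord σlo σhi c z) / sigmaStep σlo σhi c z = ∫ u, f u := by
  simp_rw [comp_oscCoord_div_sigmaStep hlo hhi]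
  rw [integral_add (integrable_comp_sub_div_div hlo (hf.indicator measurableSet_Ici))
    (integrable_comp_sub_div_div hhi (hf.indicator measurableSet_Iio)),
    integral_comp_sub_div_div hlo, integral_comp_sub_div_div hhi,
    ← integral_add (hf.indicator measurableSet_Ici) (hf.indicator measurableSet_Iio)]
  simp_rw [← compl_Ici, indicator_self_add_compl_apply]

end ChangeOfVariables

section TransDensity
variable {σlo σhi c : ℝ}

lemma transDensity_eq_skewKernel (hlo : 0 < σlo) (hhi : 0 < σhi) (t x s y : ℝ) :
    transDensity σlo σhi c t x s y =
      skewKernel ((σhi - σlo) / (σhi + σlo)) (s - t) (oscCoord σlo σhi c x)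
        (oscCoord σlo σhi c y) / sigmaStep σlo σhi c y := by
  unfold transDensity skewKernel heatKernel oscCoord
  rw [sign_div_of_pos (sigmaStep_pos hlo hhi y)]
  ring

lemma integral_transDensity_mul_transDensity (hlo : 0 < σlo) (hhi : 0 < σhi) {t u s : ℝ}
    (htu : t < u) (hus : u < s) (x y : ℝ) :
    ∫ z, transDensity σlo σhi c t x u z * transDensity σlo σhi c u z s y =
      transDensity σlo σhi c t x s y := by
  set β := (σhi - σlo) / (σhi + σlo)
  set T := oscCoord σlo σhi c
  set f := fun Z => skewKernel β (u - t) (T x) Z * skewKernel β (s - u) Z (T y) /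
    sigmaStep σlo σhi c y
  have hf : Integrable f :=
    (integrable_skewKernel_mul_skewKernel (sub_pos.2 htu) (sub_pos.2 hus) _ _).div_const _
  calc ∫ z, transDensity σlo σhi c t x u z * transDensity σlo σhi c u z s y
      = ∫ z, f (T z) / sigmaStep σlo σhi c z := by
        congr 1; ext z
        simp only [f, transDensity_eq_skewKernel hlo hhi]
        ring
    _ = ∫ Z, f Z := integral_comp_oscCoord_div hlo hhi hf
    _ = transDensity σlo σhi c t x s y := by
        rw [integral_div, integral_skewKernel_mul_skewKernel (sub_pos.2 htu) (sub_pos.2 hus),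
          transDensity_eq_skewKernel hlo hhi, sub_add_sub_cancel']

lemma measurable_transDensity (hlo : 0 < σlo) (hhi : 0 < σhi) (t s : ℝ) :
    Measurable (Function.uncurry fun x y => transDensity σlo σhi c t x s y) := by
  have : (Function.uncurry fun x y => transDensity σlo σhi c t x s y) = fun p =>
      skewKernel ((σhi - σlo) / (σhi + σlo)) (s - t) (oscCoord σlo σhi c p.1)
        (oscCoord σlo σhi c p.2) / sigmaStep σlo σhi c p.2 :=
    funext fun p => transDensity_eq_skewKernel hlo hhi t p.1 s p.2
  rw [this]
  exact ((measurable_skewKernel _ _).comp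
    (measurable_oscCoord.prodMap measurable_oscCoord)).div
      (measurable_sigmaStep.comp measurable_snd)

lemma integrable_transDensity (hlo : 0 < σlo) (hhi : 0 < σhi) {t s : ℝ} (hts : t < s)
    (x : ℝ) :
    Integrable (transDensity σlo σhi c t x s) := by
  rw [funext (transDensity_eq_skewKernel hlo hhi t x s)]
  exact integrable_comp_oscCoord_div hlo hhi (integrable_skewKernel (sub_pos.2 hts) _)

lemma integral_abs_transDensity_le (hlo : 0 < σlo) (hhi : 0 < σhi) {t s : ℝ} (hts : t < s)
    (x : ℝ) :
    ∫ y, |transDensity σlo σhi c t x s y| ≤ 1 + |(σhi - σlo) / (σhi + σlo)| := by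
  have : ∀ y, |transDensity σlo σhi c t x s y| =
      |skewKernel ((σhi - σlo) / (σhi + σlo)) (s - t) (oscCoord σlo σhi c x)
        (oscCoord σlo σhi c y)| / sigmaStep σlo σhi c y := fun y => by
    rw [transDensity_eq_skewKernel hlo hhi, abs_div, abs_of_pos (sigmaStep_pos hlo hhi y)]
  simp_rw [this]
  rw [integral_comp_oscCoord_div hlo hhi (integrable_skewKernel (sub_pos.2 hts) _).abs]
  exact integral_abs_skewKernel_le (sub_pos.2 hts) _

end TransDensity

section LossUtility
variable {σlo σhi c : ℝ} {φ₁ : ℝ → ℝ}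

lemma lossArgument_nonneg (hlo : 0 < σlo) (hhi : 0 < σhi) {x : ℝ} (hx : x < c) :
    0 ≤ -(σlo / σhi) * (x - c) :=
  mul_nonneg_of_nonpos_of_nonpos (neg_nonpos.2 (div_pos hlo hhi).le) (sub_neg.2 hx).le

lemma measurable_lossUtility (hlo : 0 < σlo) (hhi : 0 < σhi) (hφ : ContinuousOn φ₁ (Ici 0)) :
    Measurable (lossUtility σlo σhi c φ₁) := by
  have hgain : ContinuousOn (fun x => φ₁ (x - c)) (Ici c) :=
    hφ.comp (by fun_prop) fun x hx => mem_Ici.2 (sub_nonneg.2 hx)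
  have hloss : ContinuousOn (fun x => -(σhi / σlo) * φ₁ (-(σlo / σhi) * (x - c))) (Ici c)ᶜ :=
    continuousOn_const.mul
      (hφ.comp (by fun_prop) fun x hx => lossArgument_nonneg hlo hhi (not_le.1 hx))
  convert hgain.measurable_piecewise hloss measurableSet_Ici using 1
  ext x
  simp [lossUtility, Set.piecewise]

lemma abs_lossUtility_le (hlo : 0 < σlo) (hhi : 0 < σhi) {C : ℝ}
    (hC : ∀ x ∈ Ici (0 : ℝ), |φ₁ x| ≤ C) (x : ℝ) :
    |lossUtility σlo σhi c φ₁ x| ≤ max C (σhi / σlo * C) := by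
  unfold lossUtility
  split_ifs with hx
  · exact (hC _ (sub_nonneg.2 hx)).trans (le_max_left _ _)
  · rw [abs_mul, abs_neg, abs_of_pos (div_pos hhi hlo)]
    exact (mul_le_mul_of_nonneg_left (hC _ (lossArgument_nonneg hlo hhi (not_le.1 hx)))
      (div_pos hhi hlo).le).trans (le_max_right _ _)

end LossUtility

theorem Hfun_semigroup_general (σlo σhi c : ℝ) (hσlo : 0 < σlo) (hσ : σlo ≤ σhi)
    (h : ℝ) (φ₁ : ℝ → ℝ) (hφ₁ : Cb3 φ₁) :
    ∀ t : ℝ, 0 ≤ t → t < 1 + h →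
      ∀ r : ℝ, 0 < r → r ≤ 1 + h - t →
        ∀ x : ℝ, Hfun σlo σhi c φ₁ h t x =
          ∫ z, Hfun σlo σhi c φ₁ h (t + r) z * transDensity σlo σhi c t x (t + r) z := by
  intro t _ ht r hr hrt x
  have hhi : 0 < σhi := hσlo.trans_le hσ
  rcases hrt.lt_or_eq with hlt | rfl
  · have htr : t < t + r := lt_add_of_pos_right t hr
    have hrs : t + r < 1 + h := by linarith
    obtain ⟨C, hC⟩ := hφ₁.2 0 (by norm_num)
    simp only [iteratedDerivWithin_zero] at hC
    simp only [Hfun, if_pos ht, if_pos hrs]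
    calc ∫ y, lossUtility σlo σhi c φ₁ y * transDensity σlo σhi c t x (1 + h) y
        = ∫ y, lossUtility σlo σhi c φ₁ y * ∫ z, transDensity σlo σhi c t x (t + r) z *
            transDensity σlo σhi c (t + r) z (1 + h) y := by
          simp_rw [integral_transDensity_mul_transDensity hσlo hhi htr hrs]
      _ = _ := (integral_integral_mul_swap
          (measurable_transDensity hσlo hhi _ _).aestronglyMeasurable
          (integrable_transDensity hσlo hhi hrs) (integral_abs_transDensity_le hσlo hhi hrs)
          (integrable_transDensity hσlo hhi htr x)
          (measurable_lossUtility hσlo hhi hφ₁.1.continuousOn).aestronglyMeasurable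
          (abs_lossUtility_le hσlo hhi hC)).symm
  · simp only [Hfun, if_pos ht, add_sub_cancel, lt_irrefl, if_false]

/-- **Lemma (semigroup property of `H_t`).** For every `t ∈ [0, 1+h)` and
`r ∈ (0, 1+h−t]`, `H_t(x) = ∫ H_{t+r}(z)·q^c(t, x; t+r, z) dz` for all `x`. -/
theorem Hfun_semigroup (σlo σhi c : ℝ) (hσlo : 0 < σlo) (hσ : σlo ≤ σhi)
    (h : ℝ) (hh : 0 < h) (φ₁ : ℝ → ℝ) (hφ₁0 : φ₁ 0 = 0) (hφ₁ : Cb3 φ₁) :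
    ∀ t : ℝ, 0 ≤ t → t < 1 + h →
      ∀ r : ℝ, 0 < r → r ≤ 1 + h - t →
        ∀ x : ℝ, Hfun σlo σhi c φ₁ h t x =
          ∫ z, Hfun σlo σhi c φ₁ h (t + r) z * transDensity σlo σhi c t x (t + r) z :=
  Hfun_semigroup_general σlo σhi c hσlo hσ h φ₁ hφ₁

end LAB
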